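/- Let A, X be bounded operators on a reproducing kernel Hilbert space, and let X = H + iK be the Cartesian decomposition of X. Then ber²(AX ± XA*) ≤ 2‖A‖² ( ber(H²) + ber(K²) + sqrt( (ber(H²) − ber(K²))² + ber²(HK + KH) ) ). -/

import Mathlib

variable {E : Type*} [NormedAddCommGroup E] [InnerProductSpace ℂ E] [CompleteSpace E] {Ω : Type*}

/-- Berezin number of `A` w.r.t. the family of normalized reproducing kernels `k`. -/
noncomputable def ber (k : Ω → E) (A : E →L[ℂ] E) : ℝ :=
  ⨆ p : Ω, ‖(inner ℂ (A (k p)) (k p) : ℂ)‖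

noncomputable def adj (A : E →L[ℂ] E) : E →L[ℂ] E := ContinuousLinearMap.adjoint A

/-- Real part `(T + T*)/2`. -/
noncomputable def reOp (T : E →L[ℂ] E) : E →L[ℂ] E := (2 : ℂ)⁻¹ • (T + adj T)

/-- Imaginary part `(T - T*)/(2i)`. -/
noncomputable def imOp (T : E →L[ℂ] E) : E →L[ℂ] E := (2 * Complex.I)⁻¹ • (T - adj T)

/-- `|X| = (X*X)^{1/2}`. -/
noncomputable def absOp (X : E →L[ℂ] E) : E →L[ℂ] E := CFC.sqrt (adj X * X)

/-!
For `‖f‖ ≤ 1` put `g = A* f`, `H = reOp X` and `K = imOp X`. From `X = H + iK` and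
`X* = H - iK`, `⟪(AX + XA*) f, f⟫ = 2 Re⟪Hf, g⟫ - 2i Re⟪Kf, g⟫`, whose squared modulus
`4 (⟪Hf, g⟫_ℝ² + ⟪Kf, g⟫_ℝ²)` is at most `2 ‖g‖²` times twice the larger eigenvalue of the real
Gram matrix of `Hf, Kf`. Its entries `‖Hf‖² = ⟪H²f, f⟫`, `‖Kf‖² = ⟪K²f, f⟫` and
`2 Re⟪Hf, Kf⟫ = ⟪(HK + KH) f, f⟫` are bounded by the Berezin numbers in the statement, and the
eigenvalue is monotone in the diagonal entries and in the modulus of the off-diagonal one.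
Since `(iA) X + X (iA)* = i (AX - XA*)`, the difference is the sum for `iA` in place of `A`.
-/

open Complex ComplexConjugate ContinuousLinearMap

/-- Twice the larger eigenvalue of the symmetric matrix `!![a, c / 2; c / 2, b]`. -/
noncomputable def twiceMaxEigenvalue (a b c : ℝ) : ℝ := a + b + √((a - b) ^ 2 + c ^ 2)

lemma twiceMaxEigenvalue_nonneg {a b : ℝ} (ha : 0 ≤ a) (hb : 0 ≤ b) (c : ℝ) :
    0 ≤ twiceMaxEigenvalue a b c := by
  unfold twiceMaxEigenvalue; positivity

lemma quadForm_le_twiceMaxEigenvalue (a b c s t : ℝ) :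
    2 * (s ^ 2 * a + t ^ 2 * b + s * t * c) ≤ (s ^ 2 + t ^ 2) * twiceMaxEigenvalue a b c := by
  have hS : √((a - b) ^ 2 + c ^ 2) ^ 2 = (a - b) ^ 2 + c ^ 2 := Real.sq_sqrt (by positivity)
  -- Cauchy–Schwarz for `(s² - t², 2st)` and `(a - b, c)`, whose first vector has length `s² + t²`
  have hCS : (s ^ 2 - t ^ 2) * (a - b) + 2 * (s * t) * c ≤
      (s ^ 2 + t ^ 2) * √((a - b) ^ 2 + c ^ 2) := by
    refine (abs_le_of_sq_le_sq' ?_ (by positivity)).2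
    rw [mul_pow, hS]
    nlinarith [sq_nonneg ((s ^ 2 - t ^ 2) * c - 2 * (s * t) * (a - b))]
  unfold twiceMaxEigenvalue
  nlinarith [hCS]

lemma twiceMaxEigenvalue_le_twiceMaxEigenvalue {a b c a' b' c' : ℝ} (ha : a ≤ a') (hb : b ≤ b')
    (hc : |c| ≤ c') : twiceMaxEigenvalue a b c ≤ twiceMaxEigenvalue a' b' c' := by
  have hc2 : c ^ 2 ≤ c' ^ 2 := sq_le_sq' (abs_le.1 hc).1 (abs_le.1 hc).2
  have hmono : √((a - b) ^ 2 + c ^ 2) ≤ √((a - b) ^ 2 + c' ^ 2) := Real.sqrt_le_sqrt (by linarith)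
  -- `√(x² + y²) = ‖x + y i‖`, so the triangle inequality in `ℂ` applies
  have htri := norm_le_norm_add_norm_sub' (((a - b : ℝ) : ℂ) + c' * I) ((a' - b' : ℝ) + c' * I)
  rw [add_sub_add_right_eq_sub, ← ofReal_sub, norm_real, Real.norm_eq_abs, norm_add_mul_I,
    norm_add_mul_I] at htri
  have habs : |a - b - (a' - b')| ≤ (a' - a) + (b' - b) := abs_le.2 ⟨by linarith, by linarith⟩
  unfold twiceMaxEigenvalue
  linarith

section RealInnerProductSpace

variable {F : Type*} [NormedAddCommGroup F] [InnerProductSpace ℝ F]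

open scoped RealInnerProductSpace

lemma inner_sq_add_inner_sq_le (u v g : F) :
    2 * (⟪u, g⟫ ^ 2 + ⟪v, g⟫ ^ 2) ≤
      ‖g‖ ^ 2 * twiceMaxEigenvalue (‖u‖ ^ 2) (‖v‖ ^ 2) (2 * ⟪u, v⟫) := by
  set s := ⟪u, g⟫
  set t := ⟪v, g⟫
  set w := s • u + t • v
  have hw : ‖w‖ ^ 2 = s ^ 2 * ‖u‖ ^ 2 + t ^ 2 * ‖v‖ ^ 2 + s * t * (2 * ⟪u, v⟫) := by
    rw [norm_add_sq_real, norm_smul, norm_smul, real_inner_smul_left, real_inner_smul_right,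
      Real.norm_eq_abs, Real.norm_eq_abs, mul_pow, mul_pow, sq_abs, sq_abs]
    ring
  have hwg : s ^ 2 + t ^ 2 ≤ ‖w‖ * ‖g‖ := by
    have : s ^ 2 + t ^ 2 = ⟪w, g⟫ := by
      rw [inner_add_left, real_inner_smul_left, real_inner_smul_left]; ring
    exact this ▸ real_inner_le_norm w g
  have hquad := quadForm_le_twiceMaxEigenvalue (‖u‖ ^ 2) (‖v‖ ^ 2) (2 * ⟪u, v⟫) s t
  rw [← hw] at hquad
  have hT : 0 ≤ twiceMaxEigenvalue (‖u‖ ^ 2) (‖v‖ ^ 2) (2 * ⟪u, v⟫) :=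
    twiceMaxEigenvalue_nonneg (by positivity) (by positivity) _
  rcases (by positivity : (0 : ℝ) ≤ s ^ 2 + t ^ 2).eq_or_lt with hzero | hpos
  · rw [← hzero, mul_zero]; positivity
  refine le_of_mul_le_mul_left ?_ hpos
  calc (s ^ 2 + t ^ 2) * (2 * (s ^ 2 + t ^ 2)) = 2 * (s ^ 2 + t ^ 2) ^ 2 := by ring
    _ ≤ 2 * (‖w‖ * ‖g‖) ^ 2 := by gcongr
    _ = 2 * ‖w‖ ^ 2 * ‖g‖ ^ 2 := by ring
    _ ≤ (s ^ 2 + t ^ 2) * twiceMaxEigenvalue (‖u‖ ^ 2) (‖v‖ ^ 2) (2 * ⟪u, v⟫) * ‖g‖ ^ 2 := by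
      gcongr
    _ = _ := by ring

end RealInnerProductSpace

section Operators

variable (X : E →L[ℂ] E)

lemma isSelfAdjoint_reOp : IsSelfAdjoint (reOp X) := by
  simp only [IsSelfAdjoint, reOp, adj, ← star_eq_adjoint, star_smul, star_add, star_star,
    star_inv₀, star_ofNat, add_comm (star X)]

lemma isSelfAdjoint_imOp : IsSelfAdjoint (imOp X) := by
  simp only [IsSelfAdjoint, imOp, adj, ← star_eq_adjoint, star_smul, star_sub, star_star,
    star_inv₀, star_mul', star_ofNat, Complex.star_def, conj_I]
  rw [← neg_sub, smul_neg, ← neg_smul, mul_neg, inv_neg, neg_neg]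

lemma reOp_add_I_smul_imOp : reOp X + I • imOp X = X := by
  have hI : I * (2 * I)⁻¹ = (2 : ℂ)⁻¹ := by field_simp
  simp only [reOp, imOp, smul_smul, hI]
  module

lemma reOp_sub_I_smul_imOp : reOp X - I • imOp X = adj X := by
  have hI : I * (2 * I)⁻¹ = (2 : ℂ)⁻¹ := by field_simp
  simp only [reOp, imOp, smul_smul, hI]
  module

lemma I_smul_mul_add_mul_adj (A : E →L[ℂ] E) :
    (I • A) * X + X * adj (I • A) = I • (A * X - X * adj A) := by
  rw [adj, adj, ← star_eq_adjoint, ← star_eq_adjoint, star_smul, Complex.star_def, conj_I,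
    smul_mul_assoc, mul_smul_comm, smul_sub, neg_smul, sub_eq_add_neg]

end Operators

section Berezin

variable {V : Type*} [NormedAddCommGroup V] [InnerProductSpace ℂ V] (k : Ω → V)

lemma ber_nonneg (T : V →L[ℂ] V) : 0 ≤ ber k T :=
  Real.iSup_nonneg fun _ => norm_nonneg _

lemma ber_smul (c : ℂ) (T : V →L[ℂ] V) : ber k (c • T) = ‖c‖ * ber k T := by
  simp only [ber, smul_apply, inner_smul_left, norm_mul, RCLike.norm_conj,
    Real.mul_iSup_of_nonneg (norm_nonneg c)]

variable {k}

lemma norm_inner_le_ber (hk : ∀ p, ‖k p‖ ≤ 1) (T : V →L[ℂ] V) (p : Ω) :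
    ‖inner ℂ (T (k p)) (k p)‖ ≤ ber k T := by
  refine le_ciSup (f := fun p => ‖inner ℂ (T (k p)) (k p)‖) ⟨‖T‖, ?_⟩ p
  rintro _ ⟨q, rfl⟩
  calc ‖inner ℂ (T (k q)) (k q)‖ ≤ ‖T (k q)‖ * ‖k q‖ := norm_inner_le_norm _ _
    _ ≤ (‖T‖ * 1) * 1 := by gcongr; exacts [T.le_opNorm_of_le (hk q), hk q]
    _ = ‖T‖ := by ring

lemma ber_sq_le_of_forall {T : V →L[ℂ] V} {R : ℝ} (hR : 0 ≤ R)
    (h : ∀ p, ‖inner ℂ (T (k p)) (k p)‖ ^ 2 ≤ R) : ber k T ^ 2 ≤ R := by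
  rw [← Real.le_sqrt (ber_nonneg k T) hR]
  exact Real.iSup_le (fun p => Real.le_sqrt (norm_nonneg _) hR |>.2 (h p)) (Real.sqrt_nonneg R)

lemma sq_norm_apply_le_ber_mul_self (hk : ∀ p, ‖k p‖ ≤ 1) {H : V →L[ℂ] V}
    (hH : (H : V →ₗ[ℂ] V).IsSymmetric) (p : Ω) : ‖H (k p)‖ ^ 2 ≤ ber k (H * H) := by
  have h : inner ℂ ((H * H) (k p)) (k p) = ((‖H (k p)‖ ^ 2 : ℝ) : ℂ) := by
    have hHH : inner ℂ (H (H (k p))) (k p) = inner ℂ (H (k p)) (H (k p)) := hH _ _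
    rw [mul_apply_eq_comp, hHH, inner_self_eq_norm_sq_to_K]
    norm_cast
  have := norm_inner_le_ber hk (H * H) p
  rwa [h, Complex.norm_real, Real.norm_of_nonneg (by positivity)] at this

lemma abs_two_mul_re_inner_le_ber (hk : ∀ p, ‖k p‖ ≤ 1) {H K : V →L[ℂ] V}
    (hH : (H : V →ₗ[ℂ] V).IsSymmetric) (hK : (K : V →ₗ[ℂ] V).IsSymmetric) (p : Ω) :
    |2 * (inner ℂ (H (k p)) (K (k p))).re| ≤ ber k (H * K + K * H) := by
  have h : inner ℂ ((H * K + K * H) (k p)) (k p) =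
      ((2 * (inner ℂ (H (k p)) (K (k p))).re : ℝ) : ℂ) := by
    have hHK : inner ℂ (H (K (k p))) (k p) = inner ℂ (K (k p)) (H (k p)) := hH _ _
    have hKH : inner ℂ (K (H (k p))) (k p) = inner ℂ (H (k p)) (K (k p)) := hK _ _
    rw [add_apply, mul_apply_eq_comp, mul_apply_eq_comp, inner_add_left, hHK, hKH,
      ← inner_conj_symm (K (k p)), add_comm, Complex.add_conj]
  have := norm_inner_le_ber hk (H * K + K * H) p
  rwa [h, Complex.norm_real, Real.norm_eq_abs] at this

end Berezin

lemma sq_norm_inner_mul_add_mul_adj_apply_le (A X : E →L[ℂ] E) (f : E) :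
    ‖inner ℂ ((A * X + X * adj A) f) f‖ ^ 2 ≤ 2 * ‖adj A f‖ ^ 2 *
      twiceMaxEigenvalue (‖reOp X f‖ ^ 2) (‖imOp X f‖ ^ 2)
        (2 * (inner ℂ (reOp X f) (imOp X f)).re) := by
  set g := adj A f
  set p := inner ℂ (reOp X f) g
  set q := inner ℂ (imOp X f) g
  have hX : X f = reOp X f + I • imOp X f :=
    (congrArg (fun T => T f) (reOp_add_I_smul_imOp X)).symm
  have hXadj : adj X f = reOp X f - I • imOp X f :=
    (congrArg (fun T => T f) (reOp_sub_I_smul_imOp X)).symm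
  have hsum : inner ℂ ((A * X + X * adj A) f) f = p + conj I * q + (conj p - I * conj q) := by
    rw [add_apply, mul_apply_eq_comp, mul_apply_eq_comp, inner_add_left,
      ← adjoint_inner_right A (X f) f, ← adjoint_inner_right X g f, ← adj, ← adj, hX, hXadj,
      inner_add_left, inner_smul_left, inner_sub_right, inner_smul_right]
    simp only [p, q, g, inner_conj_symm]
  have hnorm : ‖inner ℂ ((A * X + X * adj A) f) f‖ ^ 2 = 2 * (2 * (p.re ^ 2 + q.re ^ 2)) := by
    rw [hsum, Complex.sq_norm, Complex.normSq_apply]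
    simp only [add_re, add_im, sub_re, sub_im, mul_re, mul_im, conj_re, conj_im, I_re, I_im]
    ring
  -- the real parts of `ℂ`-inner products are the inner products of the underlying real space
  have hgram : 2 * (p.re ^ 2 + q.re ^ 2) ≤ ‖g‖ ^ 2 *
      twiceMaxEigenvalue (‖reOp X f‖ ^ 2) (‖imOp X f‖ ^ 2)
        (2 * (inner ℂ (reOp X f) (imOp X f)).re) :=
    @inner_sq_add_inner_sq_le E _ (InnerProductSpace.rclikeToReal ℂ E) _ _ _
  rw [hnorm]
  linarith

lemma ber_mul_add_mul_adj_sq_le {k : Ω → E} (hk : ∀ p, ‖k p‖ ≤ 1) (A X : E →L[ℂ] E) :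
    ber k (A * X + X * adj A) ^ 2 ≤ 2 * ‖A‖ ^ 2 *
      twiceMaxEigenvalue (ber k (reOp X * reOp X)) (ber k (imOp X * imOp X))
        (ber k (reOp X * imOp X + imOp X * reOp X)) := by
  have hH := (isSelfAdjoint_reOp X).isSymmetric
  have hK := (isSelfAdjoint_imOp X).isSymmetric
  have hT := twiceMaxEigenvalue_nonneg (ber_nonneg k (reOp X * reOp X))
    (ber_nonneg k (imOp X * imOp X)) (ber k (reOp X * imOp X + imOp X * reOp X))
  refine ber_sq_le_of_forall (by positivity) fun p => ?_
  have hA : ‖adj A (k p)‖ ≤ ‖A‖ := by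
    simpa [adj] using (adj A).le_opNorm_of_le (hk p)
  refine (sq_norm_inner_mul_add_mul_adj_apply_le A X (k p)).trans (mul_le_mul ?_ ?_ ?_ ?_)
  · gcongr
  · exact twiceMaxEigenvalue_le_twiceMaxEigenvalue (sq_norm_apply_le_ber_mul_self hk hH p)
      (sq_norm_apply_le_ber_mul_self hk hK p) (abs_two_mul_re_inner_le_ber hk hH hK p)
  · exact twiceMaxEigenvalue_nonneg (by positivity) (by positivity) _
  · positivity

theorem stmt2 (k : Ω → E) (hk : ∀ p, ‖k p‖ = 1) (A X : E →L[ℂ] E) :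
    (ber k (A * X + X * adj A)) ^ 2 ≤ 2 * ‖A‖ ^ 2 *
      (ber k (reOp X * reOp X) + ber k (imOp X * imOp X) +
        Real.sqrt ((ber k (reOp X * reOp X) - ber k (imOp X * imOp X)) ^ 2 +
          (ber k (reOp X * imOp X + imOp X * reOp X)) ^ 2)) ∧
    (ber k (A * X - X * adj A)) ^ 2 ≤ 2 * ‖A‖ ^ 2 *
      (ber k (reOp X * reOp X) + ber k (imOp X * imOp X) +
        Real.sqrt ((ber k (reOp X * reOp X) - ber k (imOp X * imOp X)) ^ 2 +
          (ber k (reOp X * imOp X + imOp X * reOp X)) ^ 2)) := by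
  have hk' : ∀ p, ‖k p‖ ≤ 1 := fun p => (hk p).le
  refine ⟨ber_mul_add_mul_adj_sq_le hk' A X, ?_⟩
  have h := ber_mul_add_mul_adj_sq_le hk' (I • A) X
  rwa [I_smul_mul_add_mul_adj, ber_smul, norm_smul, norm_I, one_mul, one_mul] at h
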